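/- Let X : ℝ × ℝ → ℝ² be a smooth map with ∂_ρX(ρ,t) ≠ 0 for all (ρ,t); define ∂_s f := (1/‖∂_ρX‖) ∂_ρ f (at each fixed t), τ := ∂_s X, n := −τ^⊥ where (u₁,u₂)^⊥ := (−u₂,u₁), and κ := −n · ∂_s(∂_s X). Then at every (ρ,t): ∂_t( ∂_s(∂_s X) ) = [ ∂_s( n · ∂_s(∂_t X) ) + ( ∂_s X · ∂_s(∂_t X) ) κ ] n + ( n · ∂_s(∂_t X) ) ∂_s n. (Identity (2.21) in the proof of Lemma 2.2) -/

import Mathlib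

noncomputable section

open scoped RealInnerProductSpace

/-- The plane `ℝ²` with the Euclidean norm. -/
abbrev E2 : Type := EuclideanSpace ℝ (Fin 2)

/-- Clockwise-rotation convention: `(u₁, u₂)^⊥ = (−u₂, u₁)`. -/
def perp (u : E2) : E2 := (WithLp.equiv 2 (Fin 2 → ℝ)).symm ![-(u 1), u 0]

/-- Arc-length derivative (at each fixed time `t`) along the evolving curve
parameterized by `X`: `∂ₛ f := (1/‖∂_ρ X‖) ∂_ρ f`. -/
def dsT (X : ℝ → ℝ → E2) {F : Type*} [NormedAddCommGroup F] [NormedSpace ℝ F]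
    (f : ℝ → ℝ → F) (ρ t : ℝ) : F :=
  ‖deriv (fun q => X q t) ρ‖⁻¹ • deriv (fun q => f q t) ρ

/-- Time derivative `∂_t f`. -/
def dt {F : Type*} [NormedAddCommGroup F] [NormedSpace ℝ F]
    (f : ℝ → ℝ → F) (ρ t : ℝ) : F := deriv (f ρ) t

/-- Unit tangent `τ := ∂ₛ X`. -/
def tauT (X : ℝ → ℝ → E2) (ρ t : ℝ) : E2 := dsT X X ρ t

/-- Outward unit normal `n := −τ^⊥`. -/
def norT (X : ℝ → ℝ → E2) (ρ t : ℝ) : E2 := -perp (tauT X ρ t)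

/-- Curvature `κ := −n · ∂ₛ(∂ₛ X)`. -/
def curvT (X : ℝ → ℝ → E2) (ρ t : ℝ) : ℝ :=
  -(inner ℝ (norT X ρ t) (dsT X (dsT X X) ρ t) : ℝ)

/-- Willmore normal velocity `V := ∂ₛ(∂ₛ κ) + (1/2) κ³`. -/
def willVT (X : ℝ → ℝ → E2) (ρ t : ℝ) : ℝ :=
  dsT X (dsT X (curvT X)) ρ t + (1/2) * curvT X ρ t ^ 3

/-! ### Auxiliary machinery -/

lemma perp_apply_zero (u : E2) : perp u 0 = -(u 1) := rfl
lemma perp_apply_one (u : E2) : perp u 1 = u 0 := rfl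

/-- `perp` as a continuous linear map. -/
def perpCLM : E2 →L[ℝ] E2 := LinearMap.toContinuousLinearMap
  { toFun := perp
    map_add' := by
      intro x y; ext i; fin_cases i <;>
        simp [perp, WithLp.equiv_symm_apply] <;> ring
    map_smul' := by
      intro c x; ext i; fin_cases i <;>
        simp [perp, WithLp.equiv_symm_apply, mul_comm] }

lemma perpCLM_apply (u : E2) : perpCLM u = perp u := rfl

section PD

variable {F : Type*} [NormedAddCommGroup F] [NormedSpace ℝ F]

/-- Partial derivative in the first variable. -/
def pd1 (f : ℝ × ℝ → F) (p : ℝ × ℝ) : F := fderiv ℝ f p (1, 0)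

/-- Partial derivative in the second variable. -/
def pd2 (f : ℝ × ℝ → F) (p : ℝ × ℝ) : F := fderiv ℝ f p (0, 1)

lemma contDiff_pd1 {f : ℝ × ℝ → F} (hf : ContDiff ℝ (⊤ : ℕ∞) f) : ContDiff ℝ (⊤ : ℕ∞) (pd1 f) :=
  (hf.fderiv_right (by simp)).clm_apply contDiff_const

lemma contDiff_pd2 {f : ℝ × ℝ → F} (hf : ContDiff ℝ (⊤ : ℕ∞) f) : ContDiff ℝ (⊤ : ℕ∞) (pd2 f) :=
  (hf.fderiv_right (by simp)).clm_apply contDiff_const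

lemma hasDerivAt_fix2 {f : ℝ × ℝ → F} {ρ t : ℝ} (hf : DifferentiableAt ℝ f (ρ, t)) :
    HasDerivAt (fun q => f (q, t)) (pd1 f (ρ, t)) ρ := by
  have hline : HasDerivAt (fun q : ℝ => ((q : ℝ), t)) ((1 : ℝ), (0 : ℝ)) ρ :=
    (hasDerivAt_id ρ).prodMk (hasDerivAt_const ρ t)
  exact hf.hasFDerivAt.comp_hasDerivAt ρ hline

lemma hasDerivAt_fix1 {f : ℝ × ℝ → F} {ρ t : ℝ} (hf : DifferentiableAt ℝ f (ρ, t)) :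
    HasDerivAt (fun s => f (ρ, s)) (pd2 f (ρ, t)) t := by
  have hline : HasDerivAt (fun s : ℝ => (ρ, (s : ℝ))) ((0 : ℝ), (1 : ℝ)) t :=
    (hasDerivAt_const t ρ).prodMk (hasDerivAt_id t)
  exact hf.hasFDerivAt.comp_hasDerivAt t hline

/-- Clairaut / Schwarz symmetry of second partial derivatives. -/
lemma pd_comm {f : ℝ × ℝ → F} (hf : ContDiff ℝ (⊤ : ℕ∞) f) (p : ℝ × ℝ) :
    pd1 (pd2 f) p = pd2 (pd1 f) p := by
  have h1 : ∀ y, HasFDerivAt f (fderiv ℝ f y) y := fun y =>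
    (hf.differentiable (by simp) y).hasFDerivAt
  have h2 : HasFDerivAt (fderiv ℝ f) (fderiv ℝ (fderiv ℝ f) p) p :=
    (((hf.fderiv_right (m := (⊤ : ℕ∞)) (by simp)).differentiable (by simp)) p).hasFDerivAt
  have key : ∀ v e : ℝ × ℝ,
      fderiv ℝ (fun q => fderiv ℝ f q v) p e = fderiv ℝ (fderiv ℝ f) p e v := by
    intro v e
    have hc : fderiv ℝ (fun q => fderiv ℝ f q v) p
        = (ContinuousLinearMap.apply ℝ F v).comp (fderiv ℝ (fderiv ℝ f) p) :=
      ((ContinuousLinearMap.apply ℝ F v).hasFDerivAt.comp p h2).fderiv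
    rw [hc]; rfl
  have hsym := second_derivative_symmetric h1 h2 ((0 : ℝ), (1 : ℝ)) ((1 : ℝ), (0 : ℝ))
  have e2 : pd2 f = fun q => fderiv ℝ f q ((0 : ℝ), (1 : ℝ)) := rfl
  have e1 : pd1 f = fun q => fderiv ℝ f q ((1 : ℝ), (0 : ℝ)) := rfl
  simp only [pd1, pd2, e2, e1]
  rw [key, key, hsym]

variable {c d : ℝ × ℝ → ℝ} {f h : ℝ × ℝ → F} {p e : ℝ × ℝ}

lemma pdv_smul (hc : DifferentiableAt ℝ c p) (hf : DifferentiableAt ℝ f p) :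
    fderiv ℝ (fun q => c q • f q) p e
      = c p • fderiv ℝ f p e + fderiv ℝ c p e • f p := by
  rw [fderiv_fun_smul hc hf]; simp

lemma pdv_mul (hc : DifferentiableAt ℝ c p) (hd : DifferentiableAt ℝ d p) :
    fderiv ℝ (fun q => c q * d q) p e
      = c p * fderiv ℝ d p e + d p * fderiv ℝ c p e := by
  rw [fderiv_fun_mul hc hd]; simp

lemma pdv_inv (hc : DifferentiableAt ℝ c p) (h0 : c p ≠ 0) :
    fderiv ℝ (fun q => (c q)⁻¹) p e = -(c p ^ 2)⁻¹ * fderiv ℝ c p e := by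
  have hh := ((hasDerivAt_inv h0).comp_hasFDerivAt p hc.hasFDerivAt).fderiv
  rw [show (fun q => (c q)⁻¹) = ((fun y : ℝ => y⁻¹) ∘ c) from rfl, hh]
  simp [smul_eq_mul]

lemma pdv_neg : fderiv ℝ (fun q => -(f q)) p e = -(fderiv ℝ f p e) := by
  rw [fderiv_fun_neg]; simp

lemma pdv_inner {f h : ℝ × ℝ → E2} (hf : DifferentiableAt ℝ f p)
    (hh : DifferentiableAt ℝ h p) :
    fderiv ℝ (fun q => (⟪f q, h q⟫)) p e
      = ⟪f p, fderiv ℝ h p e⟫ + ⟪fderiv ℝ f p e, h p⟫ :=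
  fderiv_inner_apply ℝ hf hh e

lemma pdv_clm {G : Type*} [NormedAddCommGroup G] [NormedSpace ℝ G]
    (L : F →L[ℝ] G) (hf : DifferentiableAt ℝ f p) :
    fderiv ℝ (fun q => L (f q)) p e = L (fderiv ℝ f p e) :=
  congrFun (congrArg _ ((L.hasFDerivAt.comp p hf.hasFDerivAt).fderiv)) e

lemma pdv_sq (hc : DifferentiableAt ℝ c p) :
    fderiv ℝ (fun q => c q ^ 2) p e = 2 * c p * fderiv ℝ c p e := by
  rw [show (fun q => c q ^ 2) = fun q => c q * c q from funext fun q => pow_two (c q),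
    pdv_mul hc hc]
  ring

lemma pdv_add (hf : DifferentiableAt ℝ f p) (hh : DifferentiableAt ℝ h p) :
    fderiv ℝ (fun q => f q + h q) p e = fderiv ℝ f p e + fderiv ℝ h p e := by
  rw [fderiv_fun_add hf hh]; simp

end PD

/-! ### The core identity in terms of partial derivatives -/

def gF (P : ℝ × ℝ → E2) : ℝ × ℝ → ℝ := fun p => ‖pd1 P p‖
def TF (P : ℝ × ℝ → E2) : ℝ × ℝ → E2 := fun p => (gF P p)⁻¹ • pd1 P p
def AF (P : ℝ × ℝ → E2) : ℝ × ℝ → E2 := fun p => (gF P p)⁻¹ • pd1 (TF P) p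
def NF (P : ℝ × ℝ → E2) : ℝ × ℝ → E2 := fun p => -perp (TF P p)
def VF (P : ℝ × ℝ → E2) : ℝ × ℝ → E2 := fun p => (gF P p)⁻¹ • pd2 (pd1 P) p
def aF (P : ℝ × ℝ → E2) : ℝ × ℝ → ℝ := fun p => ⟪NF P p, VF P p⟫

theorem aux (P : ℝ × ℝ → E2) (hP : ContDiff ℝ (⊤ : ℕ∞) P) (hreg : ∀ p, pd1 P p ≠ 0) (a : ℝ × ℝ) :
    pd2 (AF P) a
      = ((gF P a)⁻¹ • pd1 (aF P) a + ⟪TF P a, VF P a⟫ * -⟪NF P a, AF P a⟫) • NF P a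
        + ⟪NF P a, VF P a⟫ • ((gF P a)⁻¹ • pd1 (NF P) a) := by
  have hX1 : ContDiff ℝ (⊤ : ℕ∞) (pd1 P) := contDiff_pd1 hP
  have hX11 : ContDiff ℝ (⊤ : ℕ∞) (pd1 (pd1 P)) := contDiff_pd1 hX1
  have hX12 : ContDiff ℝ (⊤ : ℕ∞) (pd2 (pd1 P)) := contDiff_pd2 hX1
  have hg : ContDiff ℝ (⊤ : ℕ∞) (gF P) :=
    contDiff_iff_contDiffAt.2 fun p => hX1.contDiffAt.norm ℝ (hreg p)
  have hgne : ∀ p, gF P p ≠ 0 := fun p => norm_ne_zero_iff.2 (hreg p)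
  have hgi : ContDiff ℝ (⊤ : ℕ∞) (fun p => (gF P p)⁻¹) := hg.inv hgne
  have hT : ContDiff ℝ (⊤ : ℕ∞) (TF P) := hgi.smul hX1
  have hT1c : ContDiff ℝ (⊤ : ℕ∞) (pd1 (TF P)) := contDiff_pd1 hT
  have hpg : ContDiff ℝ (⊤ : ℕ∞) (pd1 (gF P)) := contDiff_pd1 hg
  have hNid : NF P = fun p => (-(gF P p)⁻¹) • perpCLM (pd1 P p) := by
    funext p
    show -perp ((gF P p)⁻¹ • pd1 P p) = _
    rw [← perpCLM_apply, map_smul, neg_smul]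
  have hNc : ContDiff ℝ (⊤ : ℕ∞) (NF P) := by
    rw [hNid]; exact (hgi.neg).smul (perpCLM.contDiff.comp hX1)
  have hVc : ContDiff ℝ (⊤ : ℕ∞) (VF P) := hgi.smul hX12
  -- differentiability shorthands
  have dg : ∀ p, DifferentiableAt ℝ (gF P) p := fun p => (hg.differentiable (by simp)) p
  have dgi : ∀ p, DifferentiableAt ℝ (fun p => (gF P p)⁻¹) p :=
    fun p => (hgi.differentiable (by simp)) p
  have dX1 : ∀ p, DifferentiableAt ℝ (pd1 P) p := fun p => (hX1.differentiable (by simp)) p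
  have dX11 : ∀ p, DifferentiableAt ℝ (pd1 (pd1 P)) p := fun p => (hX11.differentiable (by simp)) p
  have dX12 : ∀ p, DifferentiableAt ℝ (pd2 (pd1 P)) p := fun p => (hX12.differentiable (by simp)) p
  have dT1 : ∀ p, DifferentiableAt ℝ (pd1 (TF P)) p := fun p => (hT1c.differentiable (by simp)) p
  have dpg : ∀ p, DifferentiableAt ℝ (pd1 (gF P)) p := fun p => (hpg.differentiable (by simp)) p
  have dN : ∀ p, DifferentiableAt ℝ (NF P) p := fun p => (hNc.differentiable (by simp)) p
  have dV : ∀ p, DifferentiableAt ℝ (VF P) p := fun p => (hVc.differentiable (by simp)) p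
  -- the norm relation and its consequences
  have hgsq : ∀ p, gF P p * gF P p = ⟪pd1 P p, pd1 P p⟫ :=
    fun p => (real_inner_self_eq_norm_mul_norm _).symm
  have hgrel : ∀ (e : ℝ × ℝ) (p : ℝ × ℝ),
      gF P p * fderiv ℝ (gF P) p e = ⟪pd1 P p, fderiv ℝ (pd1 P) p e⟫ := by
    intro e p
    have h3 : (fun q => gF P q * gF P q) = fun q => (⟪pd1 P q, pd1 P q⟫ : ℝ) := funext hgsq
    have h1 : fderiv ℝ (fun q => gF P q * gF P q) p e
        = 2 * (gF P p * fderiv ℝ (gF P) p e) := by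
      rw [pdv_mul (dg p) (dg p)]; ring
    have h2 : fderiv ℝ (fun q => (⟪pd1 P q, pd1 P q⟫ : ℝ)) p e
        = 2 * ⟪pd1 P p, fderiv ℝ (pd1 P) p e⟫ := by
      rw [pdv_inner (dX1 p) (dX1 p), real_inner_comm]; ring
    rw [h3, h2] at h1
    linarith
  have hgrel1 : (fun p => gF P p * pd1 (gF P) p)
      = fun p => (⟪pd1 P p, pd1 (pd1 P) p⟫ : ℝ) := funext fun p => hgrel (1, 0) p
  -- first derivative of the tangent, as a function
  have hT1id : pd1 (TF P) = fun p =>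
      (gF P p)⁻¹ • pd1 (pd1 P) p + (-(gF P p ^ 2)⁻¹ * pd1 (gF P) p) • pd1 P p := by
    funext p
    show fderiv ℝ (fun q => (gF P q)⁻¹ • pd1 P q) p (1, 0) = _
    rw [pdv_smul (dgi p) (dX1 p), pdv_inv (dg p) (hgne p)]
    rfl
  -- abbreviations at the point `a`
  set u := pd1 P a with hu
  set w := pd1 (pd1 P) a with hw
  set v := pd2 (pd1 P) a with hv
  set m := pd2 (pd1 (pd1 P)) a with hm
  set ga := gF P a with hga
  set c1 := pd1 (gF P) a with hc1
  set c2 := pd2 (gF P) a with hc2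
  set dl := pd2 (pd1 (gF P)) a with hdl
  have huu : (⟪u, u⟫ : ℝ) = ga * ga := (hgsq a).symm
  have r1 : ga * c1 = ⟪u, w⟫ := hgrel (1, 0) a
  have r2 : ga * c2 = ⟪u, v⟫ := hgrel (0, 1) a
  have r3 : ga * dl + c1 * c2 = ⟪u, m⟫ + ⟪v, w⟫ := by
    have h1 := congrArg (fun f : ℝ × ℝ → ℝ => fderiv ℝ f a ((0 : ℝ), (1 : ℝ))) hgrel1
    rw [pdv_mul (dg a) (dpg a), pdv_inner (dX1 a) (dX11 a)] at h1
    have e1 : fderiv ℝ (pd1 (gF P)) a ((0 : ℝ), (1 : ℝ)) = dl := rfl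
    have e2 : fderiv ℝ (gF P) a ((0 : ℝ), (1 : ℝ)) = c2 := rfl
    have e3 : fderiv ℝ (pd1 (pd1 P)) a ((0 : ℝ), (1 : ℝ)) = m := rfl
    have e4 : fderiv ℝ (pd1 P) a ((0 : ℝ), (1 : ℝ)) = v := rfl
    rw [e1, e2, e3, e4] at h1
    linarith [h1]
  -- auxiliary smoothness for the scalar coefficient
  have hs : ContDiff ℝ (⊤ : ℕ∞) (fun p => -(gF P p ^ 2)⁻¹ * pd1 (gF P) p) :=
    (((hg.pow 2).inv fun p => pow_ne_zero 2 (hgne p)).neg).mul hpg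
  have ds : ∀ p, DifferentiableAt ℝ (fun p => -(gF P p ^ 2)⁻¹ * pd1 (gF P) p) p :=
    fun p => (hs.differentiable (by simp)) p
  have dgsq : ∀ p, DifferentiableAt ℝ (fun p => gF P p ^ 2) p :=
    fun p => ((hg.pow 2).differentiable (by simp)) p
  have dnsqi : ∀ p, DifferentiableAt ℝ (fun p => -(gF P p ^ 2)⁻¹) p :=
    fun p => ((((hg.pow 2).inv fun p => pow_ne_zero 2 (hgne p)).neg).differentiable (by simp)) p
  have dgX11 : DifferentiableAt ℝ (fun p => (gF P p)⁻¹ • pd1 (pd1 P) p) a :=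
    ((hgi.smul hX11).differentiable (by simp)) a
  have dsX1 : DifferentiableAt ℝ
      (fun p => (-(gF P p ^ 2)⁻¹ * pd1 (gF P) p) • pd1 P p) a :=
    ((hs.smul hX1).differentiable (by simp)) a
  have dnegi : DifferentiableAt ℝ (fun p => -(gF P p)⁻¹) a :=
    ((hgi.neg).differentiable (by simp)) a
  have dperpX1 : DifferentiableAt ℝ (fun p => perpCLM (pd1 P p)) a :=
    (((perpCLM.contDiff.comp hX1)).differentiable (by simp)) a
  -- point values
  have eT1a : pd1 (TF P) a = ga⁻¹ • w + (-(ga ^ 2)⁻¹ * c1) • u := by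
    simp only [hT1id]; rfl
  have eT12 : pd2 (pd1 (TF P)) a
      = ga⁻¹ • m + (-(ga ^ 2)⁻¹ * c2) • w + (-(ga ^ 2)⁻¹ * c1) • v
        + (-(ga ^ 2)⁻¹ * dl + c1 * (-((ga ^ 2) ^ 2)⁻¹ * (2 * ga * c2)) * (-1)) • u := by
    rw [hT1id]
    show fderiv ℝ (fun p => (gF P p)⁻¹ • pd1 (pd1 P) p
        + (-(gF P p ^ 2)⁻¹ * pd1 (gF P) p) • pd1 P p) a (0, 1) = _
    rw [pdv_add dgX11 dsX1, pdv_smul (dgi a) (dX11 a), pdv_inv (dg a) (hgne a),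
      pdv_smul (ds a) (dX1 a), pdv_mul (dnsqi a) (dpg a),
      pdv_neg (f := fun p => (gF P p ^ 2)⁻¹), pdv_inv (dgsq a) (pow_ne_zero 2 (hgne a)),
      pdv_sq (dg a)]
    have e1 : fderiv ℝ (pd1 (pd1 P)) a ((0 : ℝ), (1 : ℝ)) = m := rfl
    have e2 : fderiv ℝ (gF P) a ((0 : ℝ), (1 : ℝ)) = c2 := rfl
    have e3 : fderiv ℝ (pd1 (gF P)) a ((0 : ℝ), (1 : ℝ)) = dl := rfl
    have e4 : fderiv ℝ (pd1 P) a ((0 : ℝ), (1 : ℝ)) = v := rfl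
    rw [e1, e2, e3, e4]
    module
  have eA2 : pd2 (AF P) a
      = ga⁻¹ • pd2 (pd1 (TF P)) a + (-(ga ^ 2)⁻¹ * c2) • pd1 (TF P) a := by
    show fderiv ℝ (fun p => (gF P p)⁻¹ • pd1 (TF P) p) a (0, 1) = _
    rw [pdv_smul (dgi a) (dT1 a), pdv_inv (dg a) (hgne a)]
    rfl
  have eTa : TF P a = ga⁻¹ • u := rfl
  have eVa : VF P a = ga⁻¹ • v := rfl
  have eAa : AF P a = ga⁻¹ • pd1 (TF P) a := rfl
  have eNa : NF P a = -ga⁻¹ • perpCLM u := by simp only [hNid]; rfl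
  have eN1 : pd1 (NF P) a = -ga⁻¹ • perpCLM w + (-(-(ga ^ 2)⁻¹ * c1)) • perpCLM u := by
    rw [hNid]
    show fderiv ℝ (fun p => -(gF P p)⁻¹ • perpCLM (pd1 P p)) a (1, 0) = _
    rw [pdv_smul dnegi dperpX1, pdv_clm perpCLM (dX1 a),
      pdv_neg (f := fun p => (gF P p)⁻¹), pdv_inv (dg a) (hgne a)]
    rfl
  have eV1 : pd1 (VF P) a = ga⁻¹ • m + (-(ga ^ 2)⁻¹ * c1) • v := by
    show fderiv ℝ (fun p => (gF P p)⁻¹ • pd2 (pd1 P) p) a (1, 0) = _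
    rw [pdv_smul (dgi a) (dX12 a), pdv_inv (dg a) (hgne a)]
    have e1 : fderiv ℝ (pd2 (pd1 P)) a ((1 : ℝ), (0 : ℝ)) = m := pd_comm hX1 a
    have e2 : fderiv ℝ (gF P) a ((1 : ℝ), (0 : ℝ)) = c1 := rfl
    rw [e1, e2]
  have ea1 : pd1 (aF P) a = ⟪NF P a, pd1 (VF P) a⟫ + ⟪pd1 (NF P) a, VF P a⟫ := by
    show fderiv ℝ (fun p => (⟪NF P p, VF P p⟫ : ℝ)) a (1, 0) = _
    rw [pdv_inner (dN a) (dV a)]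
    rfl
  -- now rewrite the goal into base quantities
  rw [eA2, eAa, ea1, eV1, eN1, eNa, eVa, eTa, eT12, eT1a]
  -- eliminate inverses
  have hgane : ga ≠ 0 := hgne a
  have hiaeq : ga * ga⁻¹ = 1 := mul_inv_cancel₀ hgane
  simp only [← inv_pow]
  set ia := ga⁻¹ with hiadef
  have hc1e : c1 = ia * (⟪u, w⟫ : ℝ) := by
    rw [← r1, hiadef]; field_simp
  have hc2e : c2 = ia * (⟪u, v⟫ : ℝ) := by
    rw [← r2, hiadef]; field_simp
  have hdle : dl = ia * ((⟪u, m⟫ : ℝ) + ⟪v, w⟫ - c1 * c2) := by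
    apply mul_left_cancel₀ hgane
    calc ga * dl = (⟪u, m⟫ : ℝ) + ⟪v, w⟫ - c1 * c2 := by linarith [r3]
    _ = ga * (ia * ((⟪u, m⟫ : ℝ) + ⟪v, w⟫ - c1 * c2)) := by
        rw [← mul_assoc, hiaeq, one_mul]
  rw [hdle, hc1e, hc2e]
  -- coordinates
  have huu' : u 0 * u 0 + u 1 * u 1 = ga * ga := by
    have h := huu
    simp only [PiLp.inner_apply, RCLike.inner_apply, conj_trivial, Fin.sum_univ_two] at h
    linear_combination h
  have hu2 : ia * ia * (u 0 * u 0 + u 1 * u 1) = 1 := by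
    rw [huu', hiadef]; field_simp
  ext i
  fin_cases i <;>
    simp only [PiLp.inner_apply, RCLike.inner_apply, conj_trivial, Fin.sum_univ_two,
      PiLp.add_apply, PiLp.smul_apply, PiLp.neg_apply, smul_eq_mul,
      perpCLM_apply, perp_apply_zero, perp_apply_one, Fin.isValue, Fin.zero_eta, Fin.mk_one]
  · linear_combination
      (2*ia^6*(u 0)^3*(w 0)*(v 0) + 2*ia^6*(u 0)^2*(u 1)*(w 0)*(v 1)
        + 2*ia^6*(u 0)^2*(u 1)*(w 1)*(v 0) + 2*ia^6*(u 0)*(u 1)^2*(w 1)*(v 1)) * hiaeq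
      + (4*ia^4*(u 0)*(w 0)*(v 0) + ia^4*(u 1)*(w 0)*(v 1) + 3*ia^4*(u 1)*(w 1)*(v 0)
        - ia^2*(m 0)) * hu2
  · linear_combination
      (2*ia^6*(u 0)^2*(u 1)*(w 0)*(v 0) + 2*ia^6*(u 0)*(u 1)^2*(w 0)*(v 1)
        + 2*ia^6*(u 0)*(u 1)^2*(w 1)*(v 0) + 2*ia^6*(u 1)^3*(w 1)*(v 1)) * hiaeq
      + (3*ia^4*(u 0)*(w 0)*(v 1) + ia^4*(u 0)*(w 1)*(v 0) + 4*ia^4*(u 1)*(w 1)*(v 1)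
        - ia^2*(m 1)) * hu2

/-- Identity (2.21): the time derivative of `∂ₛ(∂ₛX)` satisfies
`∂_t(∂ₛ∂ₛX) = [∂ₛ(n · ∂ₛ∂_tX) + (∂ₛX · ∂ₛ∂_tX) κ] n + (n · ∂ₛ∂_tX) ∂ₛn`. -/
theorem dt_second_arclength_derivative (X : ℝ → ℝ → E2)
    (hX : ContDiff ℝ (⊤ : ℕ∞) (fun p : ℝ × ℝ => X p.1 p.2))
    (hreg : ∀ ρ t : ℝ, deriv (fun q => X q t) ρ ≠ 0) :
    ∀ ρ t : ℝ,
      dt (fun q s => dsT X (dsT X X) q s) ρ t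
        = (dsT X (fun q s => (inner ℝ (norT X q s) (dsT X (dt X) q s) : ℝ)) ρ t
              + (inner ℝ (dsT X X ρ t) (dsT X (dt X) ρ t) : ℝ) * curvT X ρ t) • norT X ρ t
          + (inner ℝ (norT X ρ t) (dsT X (dt X) ρ t) : ℝ) • dsT X (norT X) ρ t := by
  intro ρ t
  set P : ℝ × ℝ → E2 := fun p => X p.1 p.2 with hPdef
  have hP : ContDiff ℝ (⊤ : ℕ∞) P := hX
  have hP' : Differentiable ℝ P := hP.differentiable (by simp)
  have hderiv1 : ∀ q s : ℝ, deriv (fun q' => X q' s) q = pd1 P (q, s) := fun q s =>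
    (hasDerivAt_fix2 (hP' (q, s))).deriv
  have hreg' : ∀ p : ℝ × ℝ, pd1 P p ≠ 0 := by
    rintro ⟨q, s⟩
    exact hderiv1 q s ▸ hreg q s
  -- smoothness of the building blocks
  have hX1 : ContDiff ℝ (⊤ : ℕ∞) (pd1 P) := contDiff_pd1 hP
  have hX12 : ContDiff ℝ (⊤ : ℕ∞) (pd2 (pd1 P)) := contDiff_pd2 hX1
  have hg : ContDiff ℝ (⊤ : ℕ∞) (gF P) :=
    contDiff_iff_contDiffAt.2 fun p => hX1.contDiffAt.norm ℝ (hreg' p)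
  have hgne : ∀ p, gF P p ≠ 0 := fun p => norm_ne_zero_iff.2 (hreg' p)
  have hgi : ContDiff ℝ (⊤ : ℕ∞) (fun p => (gF P p)⁻¹) := hg.inv hgne
  have hT : ContDiff ℝ (⊤ : ℕ∞) (TF P) := hgi.smul hX1
  have hA : ContDiff ℝ (⊤ : ℕ∞) (AF P) := hgi.smul (contDiff_pd1 hT)
  have hNid : NF P = fun p => (-(gF P p)⁻¹) • perpCLM (pd1 P p) := by
    funext p
    show -perp ((gF P p)⁻¹ • pd1 P p) = _
    rw [← perpCLM_apply, map_smul, neg_smul]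
  have hNc : ContDiff ℝ (⊤ : ℕ∞) (NF P) := by
    rw [hNid]; exact (hgi.neg).smul (perpCLM.contDiff.comp hX1)
  have hVc : ContDiff ℝ (⊤ : ℕ∞) (VF P) := hgi.smul hX12
  have hac : ContDiff ℝ (⊤ : ℕ∞) (aF P) := ContDiff.inner ℝ hNc hVc
  -- bridging identities
  have hbX : ∀ q s : ℝ, dsT X X q s = TF P (q, s) := by
    intro q s
    show ‖deriv (fun q' => X q' s) q‖⁻¹ • deriv (fun q' => X q' s) q = _
    rw [hderiv1]
    rfl
  have hbXfun : dsT X X = fun q s => TF P (q, s) :=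
    funext fun q => funext fun s => hbX q s
  have hbtau : ∀ q s : ℝ, tauT X q s = TF P (q, s) := hbX
  have hbnor : ∀ q s : ℝ, norT X q s = NF P (q, s) := by
    intro q s
    show -perp (tauT X q s) = -perp (TF P (q, s))
    rw [hbtau]
  have hbA : ∀ q s : ℝ, dsT X (dsT X X) q s = AF P (q, s) := by
    intro q s
    show ‖deriv (fun q' => X q' s) q‖⁻¹ • deriv (fun q' => dsT X X q' s) q = _
    rw [hderiv1, hbXfun]
    have hd : deriv (fun q' => TF P (q', s)) q = pd1 (TF P) (q, s) :=
      (hasDerivAt_fix2 ((hT.differentiable (by simp)) (q, s))).deriv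
    rw [hd]
    rfl
  have hbdt : dt X = fun q s => pd2 P (q, s) := by
    funext q s
    exact (hasDerivAt_fix1 (hP' (q, s))).deriv
  have hbV : ∀ q s : ℝ, dsT X (dt X) q s = VF P (q, s) := by
    intro q s
    show ‖deriv (fun q' => X q' s) q‖⁻¹ • deriv (fun q' => dt X q' s) q = _
    rw [hderiv1, hbdt]
    have hd : deriv (fun q' => pd2 P (q', s)) q = pd1 (pd2 P) (q, s) :=
      (hasDerivAt_fix2 (((contDiff_pd2 hP).differentiable (by simp)) (q, s))).deriv
    rw [hd, pd_comm hP (q, s)]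
    rfl
  have hbcurv : curvT X ρ t = -(⟪NF P (ρ, t), AF P (ρ, t)⟫ : ℝ) := by
    show -(inner ℝ (norT X ρ t) (dsT X (dsT X X) ρ t) : ℝ) = _
    rw [hbnor, hbA]
  have hbαfun : (fun q s => (inner ℝ (norT X q s) (dsT X (dt X) q s) : ℝ))
      = fun q s => aF P (q, s) := by
    funext q s
    show (inner ℝ (norT X q s) (dsT X (dt X) q s) : ℝ) = _
    rw [hbnor, hbV]
    rfl
  have hbdsα : dsT X (fun q s => (inner ℝ (norT X q s) (dsT X (dt X) q s) : ℝ)) ρ t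
      = (gF P (ρ, t))⁻¹ • pd1 (aF P) (ρ, t) := by
    show ‖deriv (fun q' => X q' t) ρ‖⁻¹
        • deriv (fun q' => (inner ℝ (norT X q' t) (dsT X (dt X) q' t) : ℝ)) ρ = _
    rw [hderiv1]
    have hfun : (fun q' => (inner ℝ (norT X q' t) (dsT X (dt X) q' t) : ℝ))
        = fun q' => aF P (q', t) := funext fun q' => congrFun (congrFun hbαfun q') t
    rw [hfun, (hasDerivAt_fix2 ((hac.differentiable (by simp)) (ρ, t))).deriv]
    rfl
  have hbnorfun : norT X = fun q s => NF P (q, s) :=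
    funext fun q => funext fun s => hbnor q s
  have hbdsN : dsT X (norT X) ρ t = (gF P (ρ, t))⁻¹ • pd1 (NF P) (ρ, t) := by
    show ‖deriv (fun q' => X q' t) ρ‖⁻¹ • deriv (fun q' => norT X q' t) ρ = _
    rw [hderiv1, hbnorfun, (hasDerivAt_fix2 ((hNc.differentiable (by simp)) (ρ, t))).deriv]
    rfl
  have hbLHS : dt (fun q s => dsT X (dsT X X) q s) ρ t = pd2 (AF P) (ρ, t) := by
    have hfun : (fun q s => dsT X (dsT X X) q s) = fun q s => AF P (q, s) :=
      funext fun q => funext fun s => hbA q s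
    show deriv (fun s => dsT X (dsT X X) ρ s) t = _
    rw [show (fun s => dsT X (dsT X X) ρ s) = fun s => AF P (ρ, s) from
      funext fun s => hbA ρ s]
    exact (hasDerivAt_fix1 ((hA.differentiable (by simp)) (ρ, t))).deriv
  rw [hbLHS, hbdsα, hbcurv, hbdsN, hbX, hbV, hbnor]
  exact aux P hP hreg' (ρ, t)
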